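/- arXiv:1902.00947 — 2 statements merged into one kernel-verified Lean document; each statement's English description precedes it below -/
import Mathlib

section
/- Consider primal averaging SGD: y_{k+1} = (d_k/(d_k + δ_k L)) y_k + (δ_k L/(d_k + δ_k L)) x_k and x_{k+1} = x_k - δ_k G(y_{k+1}; i_k). If f is L-smooth convex, the oracle is unbiased with variance ≤ σ² at y_{k+1}, and δ_k ≤ 1/L, then with d_{k+1} = d_k + δ_k L and e_k = L δ_k²/2, one has d_{k+1}(f(y_{k+1}) - f⋆) + (L/2) E_{i_k}‖x_{k+1} - x⋆‖² ≤ d_k (f(y_k) - f⋆) + (L/2)‖x_k - x⋆‖² + e_k σ². -/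
/-!
Let `g = f' y₁`. The averaged squared distance splits into the exact step and the noise:
`𝔼‖x₁ - x⋆‖² = ‖x_k - δ g - x⋆‖² + δ² 𝔼‖G - g‖²`, so it suffices to treat the exact gradient step.
There, convexity at `y_k` (weight `d_k`) and the interpolation inequality
`f y₁ + ⟪g, x⋆ - y₁⟫ + ‖g‖² / (2L) ≤ f x⋆` (weight `δL`) are added; the inner products cancel
because `y₁` is the `(d_k, δL)`-weighted average of `y_k` and `x_k`, and what is left over is
`(Lδ² - δ) ‖g‖² / 2 ≤ 0`.
-/

open Finset RealInnerProductSpace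

variable {E : Type*} [NormedAddCommGroup E] [InnerProductSpace ℝ E]

theorem inv_card_mul_sum_norm_sq_eq {ι : Type*} [Fintype ι] [Nonempty ι] (v : ι → E) {m : E}
    (hm : (Fintype.card ι : ℝ)⁻¹ • ∑ i, v i = m) :
    (Fintype.card ι : ℝ)⁻¹ * ∑ i, ‖v i‖ ^ 2
      = ‖m‖ ^ 2 + (Fintype.card ι : ℝ)⁻¹ * ∑ i, ‖v i - m‖ ^ 2 := by
  have hcard : (Fintype.card ι : ℝ) ≠ 0 := by positivity
  have hsum : ∑ i, v i = (Fintype.card ι : ℝ) • m := by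
    rw [← hm, smul_inv_smul₀ hcard]
  have hcross : ∑ i, ⟪v i - m, m⟫ = 0 := by
    rw [← sum_inner, sum_sub_distrib, hsum, sum_const, card_univ, ← Nat.cast_smul_eq_nsmul ℝ,
      sub_self, inner_zero_left]
  have hexpand : ∀ i, ‖v i‖ ^ 2 = ‖v i - m‖ ^ 2 + 2 * ⟪v i - m, m⟫ + ‖m‖ ^ 2 := fun i => by
    rw [← norm_add_sq_real, sub_add_cancel]
  simp only [hexpand, sum_add_distrib, ← mul_sum, hcross, sum_const, card_univ, nsmul_eq_mul]
  field_simp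
  ring

theorem inv_card_mul_sum_norm_sub_smul_sub_sq {ι : Type*} [Fintype ι] [Nonempty ι]
    (G : ι → E) {g : E} (hG : (Fintype.card ι : ℝ)⁻¹ • ∑ i, G i = g) (x z : E) (δ : ℝ) :
    (Fintype.card ι : ℝ)⁻¹ * ∑ i, ‖x - δ • G i - z‖ ^ 2
      = ‖x - δ • g - z‖ ^ 2 + δ ^ 2 * ((Fintype.card ι : ℝ)⁻¹ * ∑ i, ‖G i - g‖ ^ 2) := by
  have hcard : (Fintype.card ι : ℝ) ≠ 0 := by positivity
  have hmean : (Fintype.card ι : ℝ)⁻¹ • ∑ i, (x - δ • G i - z) = x - δ • g - z := by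
    simp only [sum_sub_distrib, ← smul_sum, sum_const, card_univ, ← Nat.cast_smul_eq_nsmul ℝ,
      smul_sub, inv_smul_smul₀ hcard, ← hG]
    rw [smul_comm]
  rw [inv_card_mul_sum_norm_sq_eq _ hmean, mul_sum, mul_sum, mul_sum]
  congr 1
  refine sum_congr rfl fun i _ => ?_
  rw [show x - δ • G i - z - (x - δ • g - z) = -(δ • (G i - g)) by module, norm_neg, norm_smul,
    Real.norm_eq_abs, mul_pow, sq_abs]
  ring

theorem smul_sub_add_smul_sub_eq_zero_of_eq_div_smul_add_div_smul {a b : ℝ} (ha : 0 ≤ a)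
    (hb : 0 ≤ b) {u v y : E} (hy : y = (a / (a + b)) • u + (b / (a + b)) • v) :
    a • (u - y) + b • (v - y) = 0 := by
  rcases (add_nonneg ha hb).eq_or_lt with hab | hab
  · obtain ⟨rfl, rfl⟩ : a = 0 ∧ b = 0 := by constructor <;> linarith
    simp
  · have hy' : (a + b) • y = a • u + b • v := by
      rw [hy, smul_add, smul_smul, smul_smul, mul_div_cancel₀ _ hab.ne',
        mul_div_cancel₀ _ hab.ne']
    rw [smul_sub, smul_sub, sub_add_sub_comm, ← add_smul, hy', sub_self]

section Smooth

variable [CompleteSpace E] {f : E → ℝ}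

theorem HasGradientAt.hasDerivAt_comp_lineMap {g a b : E} {t : ℝ}
    (h : HasGradientAt f g (AffineMap.lineMap a b t)) :
    HasDerivAt (f ∘ AffineMap.lineMap a b) ⟪g, b - a⟫ t :=
  h.hasFDerivAt.comp_hasDerivAt t AffineMap.hasDerivAt_lineMap

theorem ConvexOn.add_inner_le_of_hasGradientAt (hf : ConvexOn ℝ Set.univ f) {g y : E}
    (hg : HasGradientAt f g y) (x : E) :
    f y + ⟪g, x - y⟫ ≤ f x := by
  have hslope := (hf.comp_affineMap (AffineMap.lineMap y x)).le_slope_of_hasDerivAt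
    (Set.mem_univ 0) (Set.mem_univ 1) zero_lt_one
    (HasGradientAt.hasDerivAt_comp_lineMap (by simpa using hg))
  simp only [slope_def_field, Function.comp_apply, AffineMap.lineMap_apply_zero,
    AffineMap.lineMap_apply_one, sub_zero, div_one] at hslope
  linarith

theorem apply_add_le_of_lipschitz_gradient {g : E → E} {L : ℝ}
    (hg : ∀ z, HasGradientAt f (g z) z) (hlip : ∀ u w, ‖g u - g w‖ ≤ L * ‖u - w‖) (x v : E) :
    f (x + v) ≤ f x + ⟪g x, v⟫ + L / 2 * ‖v‖ ^ 2 := by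
  set ψ : ℝ → ℝ := fun t => (f ∘ AffineMap.lineMap x (x + v)) t - t * ⟪g x, v⟫
    - L / 2 * ‖v‖ ^ 2 * t ^ 2
  have hψ : ∀ t, HasDerivAt ψ
      (⟪g (x + t • v), v⟫ - ⟪g x, v⟫ - L / 2 * ‖v‖ ^ 2 * (2 * t)) t := by
    intro t
    have hline : AffineMap.lineMap x (x + v) t = x + t • v := by
      simp [AffineMap.lineMap_apply_module', add_comm]
    have hφ := HasGradientAt.hasDerivAt_comp_lineMap (hline ▸ hg (x + t • v))
    rw [add_sub_cancel_left, hline] at hφ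
    exact ((hφ.sub ((hasDerivAt_id t).mul_const ⟪g x, v⟫)).sub
      ((hasDerivAt_pow 2 t).const_mul (L / 2 * ‖v‖ ^ 2))).congr_deriv (by simp)
  have hanti : AntitoneOn ψ (Set.Icc 0 1) := by
    have hdiff : Differentiable ℝ ψ := fun t => (hψ t).differentiableAt
    refine antitoneOn_of_deriv_nonpos (convex_Icc 0 1) hdiff.continuous.continuousOn
      hdiff.differentiableOn fun t ht => ?_
    rw [interior_Icc] at ht
    have hgrowth : ⟪g (x + t • v) - g x, v⟫ ≤ L * t * ‖v‖ ^ 2 := calc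
      _ ≤ ‖g (x + t • v) - g x‖ * ‖v‖ := real_inner_le_norm _ _
      _ ≤ L * (t * ‖v‖) * ‖v‖ := by
        gcongr
        simpa [norm_smul, abs_of_pos ht.1] using hlip (x + t • v) x
      _ = L * t * ‖v‖ ^ 2 := by ring
    rw [(hψ t).deriv, ← inner_sub_left]
    linarith
  have h01 := hanti (Set.left_mem_Icc.2 zero_le_one) (Set.right_mem_Icc.2 zero_le_one)
    zero_le_one
  simp only [ψ, Function.comp_apply, AffineMap.lineMap_apply_zero, AffineMap.lineMap_apply_one,
    zero_mul, one_mul, sub_zero, ne_eq, OfNat.ofNat_ne_zero, not_false_eq_true, zero_pow, mul_zero,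
    one_pow, mul_one] at h01
  linarith

/-- Compare the convexity lower bound at `y` with the descent upper bound at `x`,
at the point `x - (1 / L) • (g x - g y)`. -/
theorem ConvexOn.add_inner_add_sq_norm_sub_le (hf : ConvexOn ℝ Set.univ f) {g : E → E}
    {L : ℝ} (hg : ∀ z, HasGradientAt f (g z) z) (hL : 0 < L)
    (hlip : ∀ u w, ‖g u - g w‖ ≤ L * ‖u - w‖) (x y : E) :
    f y + ⟪g y, x - y⟫ + 1 / (2 * L) * ‖g x - g y‖ ^ 2 ≤ f x := by
  set w := -((1 / L) • (g x - g y))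
  have hlower := hf.add_inner_le_of_hasGradientAt (hg y) (x + w)
  have hupper := apply_add_le_of_lipschitz_gradient hg hlip x w
  have hinner : ⟪g x, w⟫ - ⟪g y, w⟫ = -(1 / L) * ‖g x - g y‖ ^ 2 := by
    rw [← inner_sub_left, inner_neg_right, real_inner_smul_right, real_inner_self_eq_norm_sq]
    ring
  have hnorm : ‖w‖ ^ 2 = (1 / L) ^ 2 * ‖g x - g y‖ ^ 2 := by
    rw [norm_neg, norm_smul, Real.norm_eq_abs, abs_of_pos (by positivity), mul_pow]
  have hsplit : ⟪g y, x + w - y⟫ = ⟪g y, x - y⟫ + ⟪g y, w⟫ := by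
    rw [← inner_add_right, add_sub_right_comm]
  have hcoeff : -(1 / L) + L / 2 * (1 / L) ^ 2 = -(1 / (2 * L)) := by
    field_simp
    ring
  rw [hsplit] at hlower
  linear_combination hlower + hupper + hinner + L / 2 * hnorm + ‖g x - g y‖ ^ 2 * hcoeff

theorem potential_le_of_exact_gradient_step {f' : E → E} {L : ℝ}
    (hL : 0 < L) (hgrad : ∀ x, HasGradientAt f (f' x) x) (hconv : ConvexOn ℝ Set.univ f)
    (hsmooth : ∀ x y, ‖f' x - f' y‖ ≤ L * ‖x - y‖) {xstar : E} (hmin : ∀ y, f xstar ≤ f y)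
    {δ dk : ℝ} (hδ0 : 0 ≤ δ) (hδ1 : δ ≤ 1 / L) (hdk : 0 ≤ dk) {xk yk y1 : E}
    (hy1 : y1 = (dk / (dk + δ * L)) • yk + (δ * L / (dk + δ * L)) • xk) :
    (dk + δ * L) * (f y1 - f xstar) + L / 2 * ‖xk - δ • f' y1 - xstar‖ ^ 2
      ≤ dk * (f yk - f xstar) + L / 2 * ‖xk - xstar‖ ^ 2 := by
  have hstar : f' xstar = 0 := by
    simpa using IsLocalMin.hasFDerivAt_eq_zero (Filter.Eventually.of_forall hmin)
      (hgrad xstar).hasFDerivAt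
  have hconvex := hconv.add_inner_le_of_hasGradientAt (hgrad y1) yk
  have hinterp := hconv.add_inner_add_sq_norm_sub_le hgrad hL hsmooth xstar y1
  rw [hstar, zero_sub, norm_neg] at hinterp
  have hbalance :
      dk * ⟪f' y1, yk - y1⟫ + δ * L * (⟪f' y1, xk - xstar⟫ + ⟪f' y1, xstar - y1⟫) = 0 := by
    have := congrArg (inner ℝ (f' y1)) <|
      smul_sub_add_smul_sub_eq_zero_of_eq_div_smul_add_div_smul hdk (mul_nonneg hδ0 hL.le) hy1
    rwa [inner_add_right, inner_smul_right, inner_smul_right, inner_zero_right,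
      ← sub_add_sub_cancel xk xstar y1, inner_add_right] at this
  have hdist : ‖xk - δ • f' y1 - xstar‖ ^ 2
      = ‖xk - xstar‖ ^ 2 - 2 * δ * ⟪f' y1, xk - xstar⟫ + δ ^ 2 * ‖f' y1‖ ^ 2 := by
    rw [sub_right_comm, norm_sub_sq_real, real_inner_smul_right, norm_smul, Real.norm_eq_abs,
      mul_pow, sq_abs, real_inner_comm]
    ring
  have hstep : δ * L ≤ 1 := by rwa [le_div_iff₀ hL] at hδ1
  have hcoeff : δ * L * (1 / (2 * L)) = δ / 2 := by field_simp
  rw [hdist]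
  linear_combination dk * hconvex + δ * L * hinterp - hbalance - ‖f' y1‖ ^ 2 * hcoeff
    + δ * ‖f' y1‖ ^ 2 / 2 * hstep

end Smooth

/-- One-step potential inequality for SGD with primal averaging. -/
theorem sgd_primal_averaging_potential_decrease {d n : ℕ} (hn : 0 < n)
    (L σ : ℝ) (hL : 0 < L)
    (f : EuclideanSpace ℝ (Fin d) → ℝ)
    (f' : EuclideanSpace ℝ (Fin d) → EuclideanSpace ℝ (Fin d))
    (hgrad : ∀ x, HasGradientAt f (f' x) x)
    (hconv : ConvexOn ℝ Set.univ f)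
    (hsmooth : ∀ x y, ‖f' x - f' y‖ ≤ L * ‖x - y‖)
    (xstar : EuclideanSpace ℝ (Fin d)) (hmin : ∀ y, f xstar ≤ f y)
    (δ dk : ℝ) (hδ0 : 0 ≤ δ) (hδ1 : δ ≤ 1 / L) (hdk : 0 ≤ dk)
    (xk yk y1 : EuclideanSpace ℝ (Fin d))
    (hy1 : y1 = (dk / (dk + δ * L)) • yk + (δ * L / (dk + δ * L)) • xk)
    (G : Fin n → EuclideanSpace ℝ (Fin d))
    (hunbiased : (n : ℝ)⁻¹ • (∑ i, G i) = f' y1)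
    (hvar : (n : ℝ)⁻¹ * (∑ i, ‖G i - f' y1‖ ^ 2) ≤ σ ^ 2)
    (x1 : Fin n → EuclideanSpace ℝ (Fin d))
    (hx1 : ∀ i, x1 i = xk - δ • G i) :
    (dk + δ * L) * (f y1 - f xstar)
        + L / 2 * ((n : ℝ)⁻¹ * ∑ i, ‖x1 i - xstar‖ ^ 2)
      ≤ dk * (f yk - f xstar) + L / 2 * ‖xk - xstar‖ ^ 2
        + (L * δ ^ 2 / 2) * σ ^ 2 := by
  have : Nonempty (Fin n) := ⟨⟨0, hn⟩⟩
  have hnoise := inv_card_mul_sum_norm_sub_smul_sub_sq G (by simpa using hunbiased) xk xstar δ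
  simp only [Fintype.card_fin] at hnoise
  have hexact := potential_le_of_exact_gradient_step hL hgrad hconv hsmooth hmin hδ0 hδ1 hdk hy1
  have hvar' := mul_le_mul_of_nonneg_left hvar (by positivity : 0 ≤ L * δ ^ 2 / 2)
  simp only [hx1, hnoise]
  linear_combination hexact + hvar'
end

section
/- Under over-parameterization (f_i'(x⋆) = 0 for all i, each f_i convex L-smooth), the primal-averaging scheme y_{k+1} = (k/(k+1)) y_k + (1/(k+1)) x_k, x_{k+1} = x_k - (1/L) f'_{i_k}(y_{k+1}) satisfies E[f(y_k)] - f⋆ ≤ L‖x_0 - x⋆‖²/(2k) for all k ≥ 1, where the expectation is over the i.i.d. uniform indices i_0, …, i_{k-1}. -/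
/-!
The potential `Φ_k = k (f(y_k) - f⋆) + (L/2) ‖x_k - x⋆‖²` does not increase in expectation.
Expanding `‖x_{k+1} - x⋆‖²` produces the cross term `⟨f_i'(y_{k+1}), x_k - x⋆⟩`, and
`x_k - x⋆ = (y_{k+1} - x⋆) + k (y_{k+1} - y_k)` by the averaging step. Convexity of `f_i` bounds
`k ⟨f_i'(y_{k+1}), y_{k+1} - y_k⟩` below by `k (f_i(y_{k+1}) - f_i(y_k))`, and, since
`f_i'(x⋆) = 0`, the interpolation inequality for convex `L`-smooth functions bounds
`⟨f_i'(y_{k+1}), y_{k+1} - x⋆⟩` below by `f_i(y_{k+1}) - f_i(x⋆) + ‖f_i'(y_{k+1})‖² / (2L)`,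
which absorbs the quadratic term. As `x_k`, `y_k`, `y_{k+1}` do not depend on the fresh index
`i_k`, averaging over it turns `f_i` into `f`. Telescoping gives
`N (E f(y_N) - f⋆) ≤ E Φ_N ≤ Φ_0 = (L/2) ‖x_0 - x⋆‖²`.
-/

open Finset Function
open scoped BigOperators RealInnerProductSpace

section Smooth

variable {F : Type*} [NormedAddCommGroup F] [InnerProductSpace ℝ F] [CompleteSpace F]
  {f : F → ℝ} {g : F → F} {L : ℝ}

lemma HasGradientAt.hasDerivAt_comp_add_smul {f' a v : F} {t : ℝ}
    (hf : HasGradientAt f f' (a + t • v)) :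
    HasDerivAt (fun s : ℝ => f (a + s • v)) ⟪f', v⟫ t := by
  have hline : HasDerivAt (fun s : ℝ => a + s • v) v t := by
    simpa using ((hasDerivAt_id t).smul_const v).const_add a
  simpa [InnerProductSpace.toDual_apply_apply, Function.comp_def] using
    hf.hasFDerivAt.comp_hasDerivAt t hline

lemma ConvexOn.inner_le_sub_of_hasGradientAt {f' a : F} (hf : ConvexOn ℝ Set.univ f)
    (ha : HasGradientAt f f' a) (b : F) :
    ⟪f', b - a⟫ ≤ f b - f a := by
  have hder : HasDerivAt (fun s : ℝ => f (a + s • (b - a))) ⟪f', b - a⟫ 0 :=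
    HasGradientAt.hasDerivAt_comp_add_smul (by simpa using ha)
  have hline : ConvexOn ℝ Set.univ (fun s : ℝ => f (a + s • (b - a))) := by
    have := hf.comp_affineMap (AffineMap.lineMap a b : ℝ →ᵃ[ℝ] F)
    rw [Set.preimage_univ] at this
    refine this.congr fun s _ => ?_
    rw [Function.comp_apply, AffineMap.lineMap_apply, vsub_eq_sub, vadd_eq_add, add_comm]
  simpa [slope_def_field] using
    hline.le_slope_of_hasDerivAt (Set.mem_univ 0) (Set.mem_univ 1) zero_lt_one hder

lemma le_add_inner_add_of_lipschitz_gradient (hg : ∀ x, HasGradientAt f (g x) x)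
    (hlip : ∀ x y, ‖g x - g y‖ ≤ L * ‖x - y‖) (a b : F) :
    f b ≤ f a + ⟪g a, b - a⟫ + L / 2 * ‖b - a‖ ^ 2 := by
  set v := b - a
  let φ : ℝ → ℝ := fun t => f (a + t • v) - t * ⟪g a, v⟫ - L / 2 * t ^ 2 * ‖v‖ ^ 2
  have hφ : ∀ t, HasDerivAt φ (⟪g (a + t • v), v⟫ - ⟪g a, v⟫ - L * t * ‖v‖ ^ 2) t := by
    intro t
    have := ((hg (a + t • v)).hasDerivAt_comp_add_smul.sub
      ((hasDerivAt_id t).mul_const ⟪g a, v⟫)).sub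
        (((hasDerivAt_pow 2 t).const_mul (L / 2)).mul_const (‖v‖ ^ 2))
    exact this.congr_deriv (by push_cast; ring)
  have hanti : AntitoneOn φ (Set.Ici 0) := by
    refine antitoneOn_of_deriv_nonpos (convex_Ici 0)
      (fun t _ => (hφ t).continuousAt.continuousWithinAt)
      (fun t _ => (hφ t).differentiableAt.differentiableWithinAt) fun t ht => ?_
    rw [interior_Ici, Set.mem_Ioi] at ht
    rw [(hφ t).deriv, ← inner_sub_left]
    have hgt : ‖g (a + t • v) - g a‖ ≤ L * (t * ‖v‖) := by
      simpa [norm_smul, abs_of_pos ht] using hlip (a + t • v) a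
    nlinarith [real_inner_le_norm (g (a + t • v) - g a) v, norm_nonneg v]
  have := hanti (Set.mem_Ici.2 le_rfl) (zero_le_one' ℝ) zero_le_one
  simp only [φ, zero_smul, add_zero, one_smul, v, add_sub_cancel] at this
  linarith

lemma ConvexOn.sub_le_inner_sub_of_lipschitz_gradient (hL : 0 < L) (hf : ConvexOn ℝ Set.univ f)
    (hg : ∀ x, HasGradientAt f (g x) x) (hlip : ∀ x y, ‖g x - g y‖ ≤ L * ‖x - y‖) (a b : F) :
    f a - f b ≤ ⟪g a, a - b⟫ - 1 / (2 * L) * ‖g b - g a‖ ^ 2 := by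
  -- compare `a` with the gradient step from `b` for the tilted function `f - ⟪g a, ·⟫`
  set u := g b - g a
  set w := b - (1 / L) • u
  have hconv := hf.inner_le_sub_of_hasGradientAt (hg a) w
  have hdesc := le_add_inner_add_of_lipschitz_gradient hg hlip b w
  have hwb : w - b = -((1 / L) • u) := by simp [w]
  have hwa : w - a = (b - a) - (1 / L) • u := by simp only [w]; abel
  rw [hwa, inner_sub_right, real_inner_smul_right] at hconv
  rw [hwb, inner_neg_right, real_inner_smul_right, norm_neg, norm_smul,
    Real.norm_of_nonneg (by positivity)] at hdesc
  have hu : ⟪g b, u⟫ - ⟪g a, u⟫ = ‖u‖ ^ 2 := by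
    rw [← inner_sub_left, real_inner_self_eq_norm_sq]
  have hab : ⟪g a, a - b⟫ = -⟪g a, b - a⟫ := by rw [← inner_neg_right, neg_sub]
  have hsq : L / 2 * (1 / L * ‖u‖) ^ 2 = 1 / (2 * L) * ‖u‖ ^ 2 := by field_simp
  have hlin : 1 / L * ⟪g b, u⟫ - 1 / L * ⟪g a, u⟫ = 1 / L * ‖u‖ ^ 2 := by rw [← mul_sub, hu]
  have hhalf : 1 / L * ‖u‖ ^ 2 = 2 * (1 / (2 * L) * ‖u‖ ^ 2) := by field_simp
  linarith

lemma ConvexOn.norm_sub_gradient_step_sq_le (hL : 0 < L) (hf : ConvexOn ℝ Set.univ f)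
    (hg : ∀ x, HasGradientAt f (g x) x) (hlip : ∀ x y, ‖g x - g y‖ ≤ L * ‖x - y‖)
    {xstar : F} (hstar : g xstar = 0) {k : ℝ} (hk : 0 ≤ k) {p q r : F}
    (hp : p = r + k • (r - q)) :
    L / 2 * ‖p - (1 / L) • g r - xstar‖ ^ 2
      ≤ L / 2 * ‖p - xstar‖ ^ 2 - k * (f r - f q) - (f r - f xstar) := by
  have hq := hf.inner_le_sub_of_hasGradientAt (hg r) q
  have hinterp := hf.sub_le_inner_sub_of_lipschitz_gradient hL hg hlip r xstar
  rw [hstar, zero_sub, norm_neg] at hinterp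
  have hpx : p - xstar = (r - xstar) - k • (q - r) := by rw [hp]; module
  have hexp : L / 2 * ‖p - (1 / L) • g r - xstar‖ ^ 2 = L / 2 * ‖p - xstar‖ ^ 2
      - (⟪g r, r - xstar⟫ - k * ⟪g r, q - r⟫) + 1 / (2 * L) * ‖g r‖ ^ 2 := by
    rw [sub_right_comm, norm_sub_sq_real, real_inner_smul_right, norm_smul,
      Real.norm_of_nonneg (by positivity), real_inner_comm, hpx, inner_sub_right,
      real_inner_smul_right]
    field_simp
  linarith [mul_le_mul_of_nonneg_left hq hk]

lemma Fintype.expect_expect_update {ι α M : Type*} [Fintype ι] [DecidableEq ι] [Fintype α]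
    [AddCommMonoid M] [Module ℚ≥0 M] (k : ι) (F : (ι → α) → M) :
    𝔼 ω, 𝔼 a, F (update ω k a) = 𝔼 ω, F ω := by
  rcases isEmpty_or_nonempty α with hα | hα
  · have : IsEmpty (ι → α) := ⟨fun ω => hα.false (ω k)⟩
    simp [Finset.univ_eq_empty]
  let σ : (ι → α) × α ≃ (ι → α) × α :=
    Function.Involutive.toPerm (fun p => (update p.1 k p.2, p.1 k)) fun p => by simp
  calc 𝔼 ω, 𝔼 a, F (update ω k a) = 𝔼 p : (ι → α) × α, F (update p.1 k p.2) := by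
        rw [← univ_product_univ, expect_product' univ univ fun ω a => F (update ω k a)]
    _ = 𝔼 p : (ι → α) × α, F p.1 := Fintype.expect_equiv σ _ _ fun p => rfl
    _ = 𝔼 ω, F ω := by
        rw [← univ_product_univ, expect_product' univ univ fun ω (_ : α) => F ω]
        simp only [Fintype.expect_const]

namespace PrimalAveraging

variable {F : Type*} [NormedAddCommGroup F] [InnerProductSpace ℝ F] {ι : Type*}

/-- The potential of the paper with `d_k = k` and `δ_k = 1 / L`. -/
noncomputable def potential (f : F → ℝ) (L : ℝ) (xstar : F) (k : ℕ) (x y : F) : ℝ :=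
  k * (f y - f xstar) + L / 2 * ‖x - xstar‖ ^ 2

lemma expect_potential_gradient_step_le [CompleteSpace F] [Fintype ι] [Nonempty ι] {L : ℝ}
    (hL : 0 < L) {fi : ι → F → ℝ} {fi' : ι → F → F}
    (hgrad : ∀ i x, HasGradientAt (fi i) (fi' i x) x)
    (hconv : ∀ i, ConvexOn ℝ Set.univ (fi i))
    (hsmooth : ∀ i x y, ‖fi' i x - fi' i y‖ ≤ L * ‖x - y‖)
    {xstar : F} (hstar : ∀ i, fi' i xstar = 0) {f : F → ℝ} (hf : ∀ x, f x = 𝔼 i, fi i x)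
    {k : ℕ} {p q r : F} (hp : p = r + (k : ℝ) • (r - q)) :
    𝔼 j, potential f L xstar (k + 1) (p - (1 / L) • fi' j r) r ≤ potential f L xstar k p q := by
  calc 𝔼 j, potential f L xstar (k + 1) (p - (1 / L) • fi' j r) r
      ≤ 𝔼 j, ((k + 1) * (f r - f xstar) + (L / 2 * ‖p - xstar‖ ^ 2
          - k * (fi j r - fi j q) - (fi j r - fi j xstar))) := by
        refine expect_le_expect fun j _ => ?_
        rw [potential, Nat.cast_succ]
        gcongr
        exact (hconv j).norm_sub_gradient_step_sq_le hL (hgrad j) (hsmooth j) (hstar j)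
          k.cast_nonneg hp
    _ = potential f L xstar k p q := by
        simp only [expect_add_distrib, expect_sub_distrib, ← mul_expect, Fintype.expect_const,
          ← hf, potential]
        ring

structure IsPath {N : ℕ} (L : ℝ) (g : ι → F → F) (x0 : F) (ω : Fin N → ι) (x y : ℕ → F) :
    Prop where
  x_zero : x 0 = x0
  y_zero : y 0 = x0
  y_succ : ∀ k : Fin N,
    y (k.val + 1) = ((k.val : ℝ) / ((k.val : ℝ) + 1)) • y k.val + (1 / ((k.val : ℝ) + 1)) • x k.val
  x_succ : ∀ k : Fin N, x (k.val + 1) = x k.val - (1 / L) • g (ω k) (y (k.val + 1))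

namespace IsPath

variable {N : ℕ} {L : ℝ} {g : ι → F → F} {x0 : F} {ω ω' : Fin N → ι} {x y x' y' : ℕ → F}

lemma x_eq_add_smul_sub (h : IsPath L g x0 ω x y) (k : Fin N) :
    x k = y (k + 1) + (k : ℝ) • (y (k + 1) - y k) := by
  rw [h.y_succ k]
  match_scalars <;> field_simp <;> ring

lemma eq_of_eq_of_lt (h : IsPath L g x0 ω x y) (h' : IsPath L g x0 ω' x' y') {m : ℕ}
    (hm : m ≤ N) (hω : ∀ k : Fin N, k.val < m → ω k = ω' k) : x m = x' m ∧ y m = y' m := by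
  induction m with
  | zero => exact ⟨h.x_zero.trans h'.x_zero.symm, h.y_zero.trans h'.y_zero.symm⟩
  | succ m ih =>
    obtain ⟨hx, hy⟩ := ih (by omega) fun k hk => hω k (by omega)
    have hy' : y (m + 1) = y' (m + 1) := by
      rw [h.y_succ ⟨m, hm⟩, h'.y_succ ⟨m, hm⟩, hx, hy]
    refine ⟨?_, hy'⟩
    rw [h.x_succ ⟨m, hm⟩, h'.x_succ ⟨m, hm⟩, hx, hy', hω ⟨m, hm⟩ (Nat.lt_succ_self m)]

end IsPath

section Expectation

variable [CompleteSpace F] [Fintype ι] [Nonempty ι] {N : ℕ} {L : ℝ}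
  {fi : ι → F → ℝ} {fi' : ι → F → F} {xstar x0 : F} {f : F → ℝ}
  {x y : (Fin N → ι) → ℕ → F}

lemma expect_potential_succ_le (hL : 0 < L) (hgrad : ∀ i x, HasGradientAt (fi i) (fi' i x) x)
    (hconv : ∀ i, ConvexOn ℝ Set.univ (fi i))
    (hsmooth : ∀ i x y, ‖fi' i x - fi' i y‖ ≤ L * ‖x - y‖)
    (hstar : ∀ i, fi' i xstar = 0) (hf : ∀ x, f x = 𝔼 i, fi i x)
    (hpath : ∀ ω, IsPath L fi' x0 ω (x ω) (y ω)) {m : ℕ} (hm : m < N) :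
    𝔼 ω, potential f L xstar (m + 1) (x ω (m + 1)) (y ω (m + 1))
      ≤ 𝔼 ω, potential f L xstar m (x ω m) (y ω m) := by
  set k : Fin N := ⟨m, hm⟩
  rw [← Fintype.expect_expect_update k]
  refine expect_le_expect fun ω _ => ?_
  have hpast : ∀ j, x (update ω k j) m = x ω m ∧ y (update ω k j) m = y ω m := fun j =>
    (hpath _).eq_of_eq_of_lt (hpath ω) hm.le fun i hi =>
      update_of_ne (fun h => hi.ne (congrArg Fin.val h)) _ _
  have hy : ∀ j, y (update ω k j) (m + 1) = y ω (m + 1) := fun j => by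
    rw [(hpath _).y_succ k, (hpath ω).y_succ k, (hpast j).1, (hpast j).2]
  have hx : ∀ j, x (update ω k j) (m + 1) = x ω m - (1 / L) • fi' j (y ω (m + 1)) := fun j => by
    rw [(hpath _).x_succ k, (hpast j).1, hy j, update_self]
  simp only [hx, hy]
  exact expect_potential_gradient_step_le hL hgrad hconv hsmooth hstar hf
    ((hpath ω).x_eq_add_smul_sub k)

lemma expect_potential_le (hL : 0 < L) (hgrad : ∀ i x, HasGradientAt (fi i) (fi' i x) x)
    (hconv : ∀ i, ConvexOn ℝ Set.univ (fi i))
    (hsmooth : ∀ i x y, ‖fi' i x - fi' i y‖ ≤ L * ‖x - y‖)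
    (hstar : ∀ i, fi' i xstar = 0) (hf : ∀ x, f x = 𝔼 i, fi i x)
    (hpath : ∀ ω, IsPath L fi' x0 ω (x ω) (y ω)) {m : ℕ} (hm : m ≤ N) :
    𝔼 ω, potential f L xstar m (x ω m) (y ω m) ≤ L / 2 * ‖x0 - xstar‖ ^ 2 := by
  induction m with
  | zero => simp [potential, (hpath _).x_zero]
  | succ m ih =>
    exact (expect_potential_succ_le hL hgrad hconv hsmooth hstar hf hpath hm).trans (ih (by omega))

end Expectation

end PrimalAveraging

/-- Telescoped rate for primal-averaging SGD under over-parameterization: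
`E f(y_N) - f⋆ ≤ L‖x0 - x⋆‖² / (2N)`, the expectation being over the i.i.d.
uniform indices. -/
theorem overparam_primal_averaging_rate {d n N : ℕ} (hn : 0 < n) (hN : 1 ≤ N)
    (L : ℝ) (hL : 0 < L)
    (fi : Fin n → EuclideanSpace ℝ (Fin d) → ℝ)
    (fi' : Fin n → EuclideanSpace ℝ (Fin d) → EuclideanSpace ℝ (Fin d))
    (hgrad : ∀ i x, HasGradientAt (fi i) (fi' i x) x)
    (hconv : ∀ i, ConvexOn ℝ Set.univ (fi i))
    (hsmooth : ∀ i x y, ‖fi' i x - fi' i y‖ ≤ L * ‖x - y‖)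
    (xstar : EuclideanSpace ℝ (Fin d)) (hstar : ∀ i, fi' i xstar = 0)
    (f : EuclideanSpace ℝ (Fin d) → ℝ)
    (hf : ∀ x, f x = (n : ℝ)⁻¹ * ∑ i, fi i x)
    (x0 : EuclideanSpace ℝ (Fin d))
    (x y : (Fin N → Fin n) → ℕ → EuclideanSpace ℝ (Fin d))
    (hx0 : ∀ ω, x ω 0 = x0) (hy0 : ∀ ω, y ω 0 = x0)
    (hystep : ∀ ω (k : Fin N),
      y ω (k.val + 1) = ((k.val : ℝ) / ((k.val : ℝ) + 1)) • y ω k.val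
        + (1 / ((k.val : ℝ) + 1)) • x ω k.val)
    (hxstep : ∀ ω (k : Fin N),
      x ω (k.val + 1) = x ω k.val - (1 / L) • fi' (ω k) (y ω (k.val + 1))) :
    ((n : ℝ) ^ N)⁻¹ * (∑ ω : Fin N → Fin n, f (y ω N)) - f xstar
      ≤ L * ‖x0 - xstar‖ ^ 2 / (2 * (N : ℝ)) := by
  have : Nonempty (Fin n) := ⟨⟨0, hn⟩⟩
  have hf' : ∀ x, f x = 𝔼 i, fi i x := fun x => by
    rw [hf, expect_eq_sum_div_card, card_univ, Fintype.card_fin, inv_mul_eq_div]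
  have hpath : ∀ ω, PrimalAveraging.IsPath L fi' x0 ω (x ω) (y ω) :=
    fun ω => ⟨hx0 ω, hy0 ω, hystep ω, hxstep ω⟩
  have hbound := PrimalAveraging.expect_potential_le hL hgrad hconv hsmooth hstar hf' hpath le_rfl
  have hlower : (N : ℝ) * (𝔼 ω, f (y ω N) - f xstar)
      ≤ 𝔼 ω, PrimalAveraging.potential f L xstar N (x ω N) (y ω N) := by
    calc (N : ℝ) * (𝔼 ω, f (y ω N) - f xstar) = 𝔼 ω, (N : ℝ) * (f (y ω N) - f xstar) := by
          rw [← mul_expect, expect_sub_distrib, Fintype.expect_const]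
      _ ≤ _ := expect_le_expect fun ω _ => le_add_of_nonneg_right (by positivity)
  have hmean : ((n : ℝ) ^ N)⁻¹ * ∑ ω : Fin N → Fin n, f (y ω N) = 𝔼 ω, f (y ω N) := by
    rw [expect_eq_sum_div_card, card_univ, Fintype.card_fun, Fintype.card_fin,
      Fintype.card_fin, inv_mul_eq_div, Nat.cast_pow]
  rw [hmean, le_div_iff₀ (by positivity)]
  linarith
end Smooth
end
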